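/- On the homogeneous tree 𝔗_b, the linearized kernel operator 𝒦 dominating 𝒰 is unbounded on L^p(𝔗_b) for every p ∈ [1, ∞]: with E_n = s^n(p^n(o)) the base of a triangle of height n containing o, one has 𝒦1_{E_n}(x) ≥ ((b−1)/(2b)) n for every x ∈ E_n. -/

import Mathlib

open scoped ENNReal NNReal
open Set

/-- A locally finite tree presented via the data induced by a fixed geodesic ray `ω`:
a predecessor map `pred`, a height (Busemann) function `ht` increasing by one along `pred`,
finite successor sets, and connectedness (any two vertices have a common ancestor). -/
structure TreeData (V : Type*) where
  pred : V → V
  ht : V → ℤ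
  ht_pred : ∀ x, ht (pred x) = ht x + 1
  fiber_finite : ∀ x, {y | pred y = x}.Finite
  connected : ∀ x y, ∃ k l : ℕ, pred^[k] x = pred^[l] y

namespace TreeData

variable {V : Type*}

/-- The set of successors of a vertex. -/
def succs (t : TreeData V) (x : V) : Set V := {y | t.pred y = x}

/-- Every vertex has at least 3 neighbours, i.e. at least 2 successors. -/
def Thick (t : TreeData V) : Prop := ∀ x, 2 ≤ (t.succs x).ncard

/-- Homogeneous tree `𝔗_b`: every vertex has exactly `b+1` neighbours, i.e. `b` successors. -/
def Homog (t : TreeData V) (b : ℕ) : Prop := ∀ x, (t.succs x).ncard = b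

/-- The triangle with vertex `x` and height `R`: all descendants of `x` within `R` generations. -/
def tri (t : TreeData V) (x : V) (R : ℕ) : Set V := {y | ∃ j ≤ R, t.pred^[j] y = x}

/-- The base of the triangle with vertex `x` and height `R`: the `R`-fold successors of `x`. -/
def base (t : TreeData V) (x : V) (R : ℕ) : Set V := {y | t.pred^[R] y = x}

/-- The graph distance on the tree. -/
noncomputable def dist (t : TreeData V) (x y : V) : ℕ :=
  sInf {n | ∃ k l : ℕ, k + l = n ∧ t.pred^[k] x = t.pred^[l] y}

/-- Number of points of a set, as an element of `ℝ≥0∞` (counting measure). -/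
noncomputable def esize (E : Set V) : ℝ≥0∞ := ∑' _ : E, (1 : ℝ≥0∞)

/-- The average of `|f|` over a set, with respect to counting measure. -/
noncomputable def setAvg (t : TreeData V) (S : Set V) (f : V → ℝ) : ℝ≥0∞ :=
  (∑' y : S, (‖f y‖₊ : ℝ≥0∞)) / (S.ncard : ℝ≥0∞)

/-- The centred triangular maximal operator `𝒯`. -/
noncomputable def cmax (t : TreeData V) (f : V → ℝ) (x : V) : ℝ≥0∞ :=
  ⨆ R : ℕ, t.setAvg (t.tri x R) f

/-- The uncentred triangular maximal operator `𝒰`. -/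
noncomputable def umax (t : TreeData V) (f : V → ℝ) (x : V) : ℝ≥0∞ :=
  ⨆ (v : V) (R : ℕ) (_ : x ∈ t.tri v R), t.setAvg (t.tri v R) f

/-- The uncentred base maximal operator `ℬᵘ`. -/
noncomputable def ubmax (t : TreeData V) (f : V → ℝ) (x : V) : ℝ≥0∞ :=
  ⨆ (v : V) (R : ℕ) (_ : x ∈ t.tri v R), t.setAvg (t.base v R) f

/-- The modified triangle `T'_r(x) = T_r(x) ∪ {p^r(x)}`. -/
def mtri (t : TreeData V) (x : V) (r : ℕ) : Set V := t.tri x r ∪ {t.pred^[r] x}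

/-- The modified centred triangular maximal operator `𝒯'`. -/
noncomputable def cmax' (t : TreeData V) (f : V → ℝ) (x : V) : ℝ≥0∞ :=
  ⨆ r : ℕ, t.setAvg (t.mtri x r) f

/-- The modified uncentred triangular maximal operator `𝒰'`. -/
noncomputable def umax' (t : TreeData V) (f : V → ℝ) (x : V) : ℝ≥0∞ :=
  ⨆ (v : V) (r : ℕ) (_ : x ∈ t.mtri v r), t.setAvg (t.mtri v r) f

/-- The `ℓ^p` norm with respect to counting measure, for `p ∈ [1,∞]`. -/
noncomputable def eLp (p : ℝ≥0∞) (g : V → ℝ≥0∞) : ℝ≥0∞ :=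
  if p = ∞ then ⨆ v, g v else (∑' v, g v ^ p.toReal) ^ (1 / p.toReal)

/-- `|f|` as an `ℝ≥0∞`-valued function. -/
noncomputable def nn (f : V → ℝ) (x : V) : ℝ≥0∞ := (‖f x‖₊ : ℝ≥0∞)

/-- The point mass at `o`. -/
noncomputable def delta (o : V) : V → ℝ := ({o} : Set V).indicator fun _ => 1

end TreeData

/-- The linearizing kernel `κ(x,y) = sup_{T ∋ x} 1_T(y)/|T|`. -/
noncomputable def TreeData.kappa {V : Type*} (t : TreeData V) (x y : V) : ℝ≥0∞ :=
  ⨆ (v : V) (R : ℕ) (_ : x ∈ t.tri v R),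
    (t.tri v R).indicator (fun _ => (1 : ℝ≥0∞)) y / ((t.tri v R).ncard : ℝ≥0∞)

/-- The integral operator `𝒦` with kernel `κ`. -/
noncomputable def TreeData.Kop {V : Type*} (t : TreeData V) (f : V → ℝ≥0∞) (x : V) : ℝ≥0∞ :=
  ∑' y, t.kappa x y * f y

/-!
For `x ∈ E_n` and `0 ≤ j < n`, the points `y ∈ E_n` whose confluent with `x` is `p^{j+1}(x)`
form a shell of `(b - 1) b^j` points. Both `x` and such a `y` lie in the triangle with vertex
`p^{j+1}(x)` and height `j + 1`, which has at most `2 b^{j+1}` points, so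
`κ(x, y) ≥ 1 / (2 b^{j+1})` and each shell contributes at least `(b - 1) / (2 b)` to
`𝒦 1_{E_n}(x)`. Summing over the `n` shells gives the lower bound. As `‖1_{E_n}‖_p` is finite
and nonzero, a bound `‖𝒦 f‖_p ≤ C ‖f‖_p` would force `C ≥ n (b - 1) / (2 b)` for every `n`.
-/

namespace TreeData

variable {V : Type*} (t : TreeData V)

lemma ht_pred_iterate (k : ℕ) (x : V) : t.ht (t.pred^[k] x) = t.ht x + k := by
  induction k with
  | zero => simp
  | succ k ih => rw [Function.iterate_succ_apply', t.ht_pred, ih]; push_cast; ring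

variable {t} in
lemma pred_iterate_eq_of_le {x y : V} {k m : ℕ} (h : t.pred^[k] y = t.pred^[k] x)
    (hkm : k ≤ m) : t.pred^[m] y = t.pred^[m] x := by
  obtain ⟨d, rfl⟩ := Nat.exists_eq_add_of_le hkm
  rw [Nat.add_comm, Function.iterate_add_apply, Function.iterate_add_apply, h]

lemma base_succ (x : V) (R : ℕ) : t.base x (R + 1) = ⋃ w ∈ t.succs x, t.base w R := by
  ext y
  simp only [base, succs, mem_ofPred_eq, mem_iUnion, exists_prop]
  exact ⟨fun h => ⟨_, (Function.iterate_succ_apply' t.pred R y).symm.trans h, rfl⟩,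
    fun ⟨w, hw, hyw⟩ => by rw [Function.iterate_succ_apply', hyw, hw]⟩

lemma pairwiseDisjoint_base_vertex (R : ℕ) :
    (univ : Set V).PairwiseDisjoint fun w => t.base w R :=
  fun _ _ _ _ hne => disjoint_left.2 fun _ hy hy' => hne (hy.symm.trans hy')

lemma pairwiseDisjoint_base_height (x : V) :
    (univ : Set ℕ).PairwiseDisjoint (t.base x) := by
  refine fun j _ j' _ hne => disjoint_left.2 fun y (hy : _ = x) (hy' : _ = x) => hne ?_
  have := (t.ht_pred_iterate j y).symm.trans (hy ▸ hy' ▸ t.ht_pred_iterate j' y)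
  exact_mod_cast add_left_cancel this

lemma base_finite (x : V) (R : ℕ) : (t.base x R).Finite := by
  induction R generalizing x with
  | zero => simp [base]
  | succ R ih => rw [base_succ]; exact (t.fiber_finite x).biUnion fun w _ => ih w

lemma ncard_base {b : ℕ} (hhom : t.Homog b) (x : V) (R : ℕ) : (t.base x R).ncard = b ^ R := by
  induction R generalizing x with
  | zero => simp [base]
  | succ R ih =>
    have hsuccs : (t.succs x).Finite := t.fiber_finite x
    rw [base_succ, hsuccs.ncard_biUnion (fun w _ => t.base_finite w R)
      ((t.pairwiseDisjoint_base_vertex R).subset (subset_univ _)), finsum_mem_congr rfl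
      fun w _ => ih w, finsum_mem_eq_finite_toFinset_sum _ hsuccs, Finset.sum_const,
      ← ncard_eq_toFinset_card _ hsuccs, hhom x, smul_eq_mul, pow_succ']

lemma tri_eq_biUnion_base (x : V) (R : ℕ) :
    t.tri x R = ⋃ j ∈ (Finset.range (R + 1) : Set ℕ), t.base x j := by
  ext y
  simp only [tri, base, mem_ofPred_eq, mem_iUnion, Finset.coe_range, mem_Iio, Nat.lt_succ_iff,
    exists_prop]

lemma ncard_tri_le {b : ℕ} (hb : 2 ≤ b) (hhom : t.Homog b) (x : V) (R : ℕ) :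
    (t.tri x R).ncard ≤ 2 * b ^ R := by
  rw [tri_eq_biUnion_base, (Finset.range (R + 1)).finite_toSet.ncard_biUnion
    (fun j _ => t.base_finite x j) ((t.pairwiseDisjoint_base_height x).subset (subset_univ _)),
    finsum_mem_coe_finset, Finset.sum_range_succ]
  simp only [t.ncard_base hhom]
  linarith [Nat.geomSum_lt hb (s := Finset.range R) fun k hk => Finset.mem_range.1 hk]

lemma inv_ncard_tri_le_kappa {v x y : V} {R : ℕ} (hx : x ∈ t.tri v R) (hy : y ∈ t.tri v R) :
    ((t.tri v R).ncard : ℝ≥0∞)⁻¹ ≤ t.kappa x y := by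
  refine le_trans ?_ (le_iSup_of_le v (le_iSup_of_le R (le_iSup_of_le hx le_rfl)))
  rw [indicator_of_mem hy, ENNReal.div_eq_inv_mul, mul_one]

lemma inv_le_kappa_of_pred_iterate_eq {b : ℕ} (hb : 2 ≤ b) (hhom : t.Homog b) {x y : V} {j : ℕ}
    (h : t.pred^[j] y = t.pred^[j] x) : (2 * (b : ℝ≥0∞) ^ j)⁻¹ ≤ t.kappa x y := by
  refine le_trans ?_ (t.inv_ncard_tri_le_kappa ⟨j, le_rfl, rfl⟩ ⟨j, le_rfl, h⟩)
  exact ENNReal.inv_le_inv.2 (by exact_mod_cast t.ncard_tri_le hb hhom _ j)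

lemma base_pred_iterate_mono (x : V) {i m : ℕ} (h : i ≤ m) :
    t.base (t.pred^[i] x) i ⊆ t.base (t.pred^[m] x) m :=
  fun _ hy => pred_iterate_eq_of_le hy h

/-- The points `y` on the horocycle of `x` whose confluent with `x` is `p^{j+1}(x)`,
i.e. those with `d(x, y) = 2 (j + 1)`. -/
def shell (x : V) (j : ℕ) : Set V := t.base (t.pred^[j + 1] x) (j + 1) \ t.base (t.pred^[j] x) j

lemma shell_subset_base {x : V} {j n : ℕ} (h : j < n) : t.shell x j ⊆ t.base (t.pred^[n] x) n :=
  sdiff_subset.trans (t.base_pred_iterate_mono x h)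

open scoped Function in
lemma pairwise_disjoint_shell (x : V) : Pairwise (Disjoint on (t.shell x)) :=
  (pairwise_disjoint_on _).2 fun _ _ h => disjoint_left.2 fun _ hi hj =>
    hj.2 (t.base_pred_iterate_mono x h hi.1)

lemma ncard_shell {b : ℕ} (hhom : t.Homog b) (x : V) (j : ℕ) :
    (t.shell x j).ncard = (b - 1) * b ^ j := by
  rw [shell, ncard_sdiff (t.base_pred_iterate_mono x j.le_succ) (t.base_finite _ _),
    t.ncard_base hhom, t.ncard_base hhom, pow_succ', ← Nat.sub_one_mul]

lemma encard_shell_mul_inv {b : ℕ} (hb : b ≠ 0) (hhom : t.Homog b) (x : V) (j : ℕ) :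
    (t.shell x j).encard * (2 * (b : ℝ≥0∞) ^ (j + 1))⁻¹ = ((b : ℝ≥0∞) - 1) / (2 * b) := by
  have hbj : (b : ℝ≥0∞) ^ j ≠ 0 := pow_ne_zero _ (by exact_mod_cast hb)
  have hfin : (t.shell x j).Finite := (t.base_finite _ _).sdiff
  rw [← hfin.cast_ncard_eq, t.ncard_shell hhom, ← div_eq_mul_inv]
  push_cast [Nat.cast_sub (Nat.one_le_iff_ne_zero.2 hb)]
  rw [pow_succ', ← mul_assoc, ENNReal.mul_div_mul_right _ _ hbj (by simp)]

lemma le_Kop_indicator_base {b : ℕ} (hb : 2 ≤ b) (hhom : t.Homog b) {v x : V} {n : ℕ}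
    (hx : x ∈ t.base v n) :
    ((b : ℝ≥0∞) - 1) / (2 * b) * n ≤ t.Kop ((t.base v n).indicator fun _ => 1) x := by
  obtain rfl : t.pred^[n] x = v := hx
  set f : V → ℝ≥0∞ := (t.base (t.pred^[n] x) n).indicator fun _ => 1
  calc ((b : ℝ≥0∞) - 1) / (2 * b) * n
      = ∑ j ∈ Finset.range n, ∑' _ : t.shell x j, (2 * (b : ℝ≥0∞) ^ (j + 1))⁻¹ := by
        simp [t.encard_shell_mul_inv (by omega) hhom, mul_comm]
    _ ≤ ∑ j ∈ Finset.range n, ∑' y : t.shell x j, t.kappa x y * f y := by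
        gcongr with j hj y
        rw [show f y = 1 from indicator_of_mem (t.shell_subset_base (Finset.mem_range.1 hj) y.2) _,
          mul_one]
        exact t.inv_le_kappa_of_pred_iterate_eq hb hhom y.2.1
    _ = ∑' y : ⋃ j ∈ (Finset.range n : Set ℕ), t.shell x j, t.kappa x y * f y := by
        rw [ENNReal.tsum_biUnion' (f := fun y => t.kappa x y * f y)
          ((t.pairwise_disjoint_shell x).set_pairwise _),
          Finset.tsum_subtype' (Finset.range n) fun j => ∑' y : t.shell x j, t.kappa x y * f y]
    _ ≤ t.Kop f x := ENNReal.tsum_comp_le_tsum_of_injective Subtype.val_injective _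

lemma eLp_mono {p : ℝ≥0∞} {g h : V → ℝ≥0∞} (hgh : g ≤ h) : eLp p g ≤ eLp p h := by
  unfold eLp
  split_ifs
  · exact iSup_mono hgh
  · gcongr with v
    exact hgh v

lemma eLp_const_mul {p : ℝ≥0∞} (hp : p ≠ 0) (c : ℝ≥0∞) (g : V → ℝ≥0∞) :
    eLp p (fun v => c * g v) = c * eLp p g := by
  unfold eLp
  split_ifs with hpt
  · exact (ENNReal.mul_iSup c g).symm
  · have hr : 0 < p.toReal := ENNReal.toReal_pos hp hpt
    simp_rw [ENNReal.mul_rpow_of_nonneg _ _ hr.le, ENNReal.tsum_mul_left]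
    rw [ENNReal.mul_rpow_of_nonneg _ _ (one_div_nonneg.2 hr.le), ← ENNReal.rpow_mul,
      mul_one_div_cancel hr.ne', ENNReal.rpow_one]

lemma eLp_indicator_one_pos_ne_top {p : ℝ≥0∞} (hp : p ≠ 0) {E : Set V} (hfin : E.Finite)
    (hne : E.Nonempty) :
    0 < eLp p (E.indicator fun _ => 1) ∧ eLp p (E.indicator fun _ => 1) ≠ ∞ := by
  unfold eLp
  split_ifs with hpt
  · obtain ⟨x, hx⟩ := hne
    have hsup : ⨆ v, E.indicator (fun _ => (1 : ℝ≥0∞)) v = 1 :=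
      le_antisymm (iSup_le (indicator_le fun _ _ => le_rfl))
        (le_iSup_of_le x (indicator_of_mem hx fun _ => (1 : ℝ≥0∞)).ge)
    simp [hsup]
  · have hr : 0 < p.toReal := ENNReal.toReal_pos hp hpt
    have hpow (v : V) : E.indicator (fun _ => (1 : ℝ≥0∞)) v ^ p.toReal =
        E.indicator (fun _ => 1) v := by
      by_cases hv : v ∈ E <;> simp [hv, hr]
    have hsum : ∑' v, E.indicator (fun _ => (1 : ℝ≥0∞)) v ^ p.toReal = E.ncard := by
      rw [tsum_congr hpow, ← tsum_subtype, ENNReal.tsum_set_one, ← hfin.cast_ncard_eq]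
      rfl
    rw [hsum]
    exact ⟨ENNReal.rpow_pos (by exact_mod_cast (ncard_pos hfin).2 hne) (ENNReal.natCast_ne_top _),
      ENNReal.rpow_ne_top_of_nonneg (by positivity) (ENNReal.natCast_ne_top _)⟩

lemma not_bounded_of_le_indicator (T : (V → ℝ≥0∞) → V → ℝ≥0∞) {p : ℝ≥0∞} (hp : p ≠ 0)
    {c : ℝ≥0∞} (hc : c ≠ 0)
    (hT : ∀ n : ℕ, ∃ E : Set V, E.Finite ∧ E.Nonempty ∧
      ∀ x ∈ E, c * n ≤ T (E.indicator fun _ => 1) x) :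
    ¬ ∃ C : ℝ≥0∞, C < ∞ ∧ ∀ f : V → ℝ≥0∞, eLp p (T f) ≤ C * eLp p f := by
  rintro ⟨C, hC, hbound⟩
  obtain ⟨n, hn⟩ := ENNReal.exists_nat_mul_gt hc hC.ne
  obtain ⟨E, hfin, hne, hE⟩ := hT n
  obtain ⟨hpos, hlt⟩ := eLp_indicator_one_pos_ne_top hp hfin hne
  have hlow : (fun v => c * n * E.indicator (fun _ => 1) v) ≤ T (E.indicator fun _ => 1) := by
    intro v
    by_cases hv : v ∈ E
    · simpa [hv] using hE v hv
    · simp [hv]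
  have hcn : c * n * eLp p (E.indicator fun _ => 1) ≤ C * eLp p (E.indicator fun _ => 1) := by
    rw [← eLp_const_mul hp]
    exact (eLp_mono hlow).trans (hbound _)
  rw [mul_comm] at hn
  exact hn.not_ge ((ENNReal.mul_le_mul_iff_left hpos.ne' hlt).1 hcn)

end TreeData

/-- On `𝔗_b`, with `E_n = s^n(p^n(o))`,
`𝒦 1_{E_n}(x) ≥ ((b-1)/(2b)) n` for every `x ∈ E_n`; consequently `𝒦` is unbounded on
`L^p(𝔗_b)` for every `p ∈ [1,∞]`. -/
theorem stmt16 {V : Type*} (t : TreeData V) (b : ℕ) (hb : 2 ≤ b) (hhom : t.Homog b)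
    (o : V) :
    (∀ n : ℕ, 1 ≤ n → ∀ x ∈ t.base (t.pred^[n] o) n,
        ((b : ℝ≥0∞) - 1) / (2 * b) * n ≤
          t.Kop ((t.base (t.pred^[n] o) n).indicator fun _ => 1) x) ∧
      ∀ p : ℝ≥0∞, 1 ≤ p →
        ¬ ∃ C : ℝ≥0∞, C < ∞ ∧
            ∀ f : V → ℝ≥0∞, TreeData.eLp p (t.Kop f) ≤ C * TreeData.eLp p f := by
  refine ⟨fun n _ x hx => t.le_Kop_indicator_base hb hhom hx, fun p hp => ?_⟩
  have hc : ((b : ℝ≥0∞) - 1) / (2 * b) ≠ 0 := by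
    have hb1 : (1 : ℝ≥0∞) < b := by exact_mod_cast hb
    exact (ENNReal.div_pos (tsub_pos_of_lt hb1).ne'
      (ENNReal.mul_ne_top ENNReal.ofNat_ne_top (ENNReal.natCast_ne_top b))).ne'
  exact TreeData.not_bounded_of_le_indicator t.Kop (zero_lt_one.trans_le hp).ne' hc fun n =>
    ⟨_, t.base_finite _ n, ⟨o, rfl⟩, fun _ hx => t.le_Kop_indicator_base hb hhom hx⟩
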